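/- Let H(t,ξ) be the Zaremba Green function of the lower half-plane and fix a complex ξ with Im ξ < 0. Then the radial derivative of H in t satisfies (∂/∂ρ) H(ρ e^{iθ}, ξ) = O(ρ^{−1/2}) as ρ → 0, uniformly in the angle: there exist constants C > 0 and r > 0 such that |(∂/∂ρ) H(ρ e^{iθ}, ξ)| ≤ C ρ^{−1/2} for all 0 < ρ < r and all θ ∈ [−π, 0] (derivatives at the endpoint angles taken one-sidedly from the lower half-plane). -/

import Mathlib

open Complex Real

/-- The branch angle in [-π, π): equals `Complex.arg` except that angle π is mapped to -π. -/
noncomputable def branchAngle (w : ℂ) : ℝ :=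
  if Complex.arg w = Real.pi then -Real.pi else Complex.arg w

/-- Square root branch √w = √ρ e^{iθ/2} with θ ∈ [-π, π), and √0 = 0. -/
noncomputable def zsqrt (w : ℂ) : ℂ :=
  (Real.sqrt (‖w‖) : ℂ) * Complex.exp (Complex.I * (branchAngle w / 2))

/-- The Zaremba Green function of the lower half-plane. -/
noncomputable def ZH (t ξ : ℂ) : ℝ :=
  -(1 / (2 * Real.pi)) *
    (Real.log (‖t - ξ‖) + Real.log (‖t - (starRingEnd ℂ) ξ‖)
      - 2 * Real.log (‖zsqrt t + zsqrt ξ‖)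
      - 2 * Real.log (‖zsqrt t - zsqrt ((starRingEnd ℂ) ξ)‖))

/-! Along the ray `t = x e^{iθ}`, `θ ∈ [-π, π)`, the branch gives `√t = √x e^{iθ/2}`, so each of
the four terms of `H` is `log ‖g x • a + c‖` with `‖a‖ = 1`, a fixed `c ≠ 0`, and `g = id` (the
two logarithmic poles) or `g = √·` (the two square-root terms). Such a term has derivative at
most `2 |g'(x)| / ‖c‖` while `g x • a` stays in the ball of radius `‖c‖ / 2`. The square-root
terms, with `g' = 1 / (2√x)`, give the `ρ^{-1/2}` growth, and nothing depends on `θ`. -/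

section LogNorm

open scoped RealInnerProductSpace

variable {F : Type*} [NormedAddCommGroup F] [InnerProductSpace ℝ F]

theorem HasDerivAt.log_norm {f : ℝ → F} {f' : F} {x : ℝ} (hf : HasDerivAt f f' x)
    (h0 : f x ≠ 0) :
    HasDerivAt (fun y => Real.log ‖f y‖) (⟪f x, f'⟫ / ‖f x‖ ^ 2) x := by
  have hhalf : (fun y => Real.log ‖f y‖) = fun y => 1 / 2 * Real.log (‖f y‖ ^ 2) := by
    funext y
    rw [Real.log_pow]
    ring
  rw [hhalf]
  exact ((hf.norm_sq.log (by positivity)).const_mul (1 / 2)).congr_deriv (by ring)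

theorem abs_real_inner_div_norm_sq_le (v w : F) : |⟪v, w⟫ / ‖v‖ ^ 2| ≤ ‖w‖ / ‖v‖ := by
  rcases eq_or_ne v 0 with rfl | hv
  · simp
  have hv' : 0 < ‖v‖ := norm_pos_iff.mpr hv
  calc |⟪v, w⟫ / ‖v‖ ^ 2| = |⟪v, w⟫| / ‖v‖ ^ 2 := by rw [abs_div, abs_of_pos (pow_pos hv' 2)]
    _ ≤ ‖v‖ * ‖w‖ / ‖v‖ ^ 2 := by gcongr; exact abs_real_inner_le_norm v w
    _ = ‖w‖ / ‖v‖ := by field_simp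

theorem exists_hasDerivAt_log_norm_smul_add {g : ℝ → ℝ} {g' x : ℝ} (hg : HasDerivAt g g' x)
    {a c : F} (hc : c ≠ 0) (hx : |g x| * ‖a‖ ≤ ‖c‖ / 2) :
    ∃ d, HasDerivAt (fun y => Real.log ‖g y • a + c‖) d x ∧ |d| ≤ 2 * |g'| * ‖a‖ / ‖c‖ := by
  have hc' : 0 < ‖c‖ := norm_pos_iff.mpr hc
  have hlow : ‖c‖ / 2 ≤ ‖g x • a + c‖ := by
    have := norm_sub_le (g x • a + c) (g x • a)
    rw [add_sub_cancel_left, norm_smul, Real.norm_eq_abs] at this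
    linarith
  have h0 : g x • a + c ≠ 0 := norm_pos_iff.mp (by linarith)
  refine ⟨_, HasDerivAt.log_norm ((hg.smul_const a).add_const c) h0, ?_⟩
  calc _ ≤ ‖g' • a‖ / ‖g x • a + c‖ := abs_real_inner_div_norm_sq_le _ _
    _ ≤ |g'| * ‖a‖ / (‖c‖ / 2) := by
        rw [norm_smul, Real.norm_eq_abs]
        gcongr
    _ = 2 * |g'| * ‖a‖ / ‖c‖ := by field_simp

theorem exists_hasDerivAt_log_norm_smul_add_of_abs_le {a c : F} (hc : c ≠ 0) (ha : ‖a‖ = 1)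
    {x : ℝ} (hx : |x| ≤ ‖c‖ / 2) :
    ∃ d, HasDerivAt (fun y => Real.log ‖y • a + c‖) d x ∧ |d| ≤ 2 / ‖c‖ := by
  obtain ⟨d, hd, hdle⟩ :=
    exists_hasDerivAt_log_norm_smul_add (hasDerivAt_id' x) hc (by rwa [ha, mul_one])
  exact ⟨d, hd, by rwa [abs_one, ha, mul_one, mul_one] at hdle⟩

theorem exists_hasDerivAt_log_norm_sqrt_smul_add {a c : F} (hc : c ≠ 0) (ha : ‖a‖ = 1)
    {x : ℝ} (hx : 0 < x) (hxc : √x ≤ ‖c‖ / 2) :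
    ∃ d, HasDerivAt (fun y => Real.log ‖√y • a + c‖) d x ∧ |d| ≤ 1 / (√x * ‖c‖) := by
  obtain ⟨d, hd, hdle⟩ := exists_hasDerivAt_log_norm_smul_add (Real.hasDerivAt_sqrt hx.ne') hc
    (by rwa [ha, mul_one, abs_of_nonneg (Real.sqrt_nonneg x)])
  have hsx : 0 < √x := Real.sqrt_pos.mpr hx
  refine ⟨d, hd, hdle.trans_eq ?_⟩
  rw [ha, abs_of_pos (by positivity)]
  field_simp

end LogNorm

theorem norm_zsqrt (w : ℂ) : ‖zsqrt w‖ = √‖w‖ := by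
  rw [zsqrt, norm_mul, Complex.norm_exp, Complex.norm_real,
    Real.norm_of_nonneg (Real.sqrt_nonneg _)]
  simp

theorem branchAngle_ofReal_mul_exp {ρ θ : ℝ} (hρ : 0 < ρ) (hθ : θ ∈ Set.Ico (-π) π) :
    branchAngle (ρ * exp (I * θ)) = θ := by
  have hexp : exp (I * θ) = Complex.cos θ + Complex.sin θ * I := by rw [mul_comm, exp_mul_I]
  rcases hθ.1.eq_or_lt with rfl | hθ'
  · have hneg : (ρ : ℂ) * exp (I * ↑(-π)) = ((-ρ : ℝ) : ℂ) := by
      rw [hexp]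
      push_cast
      simp
    rw [branchAngle, if_pos (by rw [hneg, arg_ofReal_of_neg (neg_neg_of_pos hρ)])]
  · rw [branchAngle, hexp, arg_mul_cos_add_sin_mul_I hρ ⟨hθ', hθ.2.le⟩, if_neg hθ.2.ne]

theorem zsqrt_ofReal_mul_exp {ρ θ : ℝ} (hρ : 0 < ρ) (hθ : θ ∈ Set.Ico (-π) π) :
    zsqrt (ρ * exp (I * θ)) = √ρ * exp (I * (θ / 2)) := by
  rw [zsqrt, branchAngle_ofReal_mul_exp hρ hθ, norm_mul, norm_exp_I_mul_ofReal, norm_real,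
    Real.norm_of_nonneg hρ.le, mul_one]

theorem ZH_ofReal_mul_exp (ξ : ℂ) {x θ : ℝ} (hx : 0 < x) (hθ : θ ∈ Set.Ico (-π) π) :
    ZH (x * exp (I * θ)) ξ =
      -(1 / (2 * π)) *
        (Real.log ‖x • exp (I * θ) + -ξ‖ + Real.log ‖x • exp (I * θ) + -(starRingEnd ℂ) ξ‖
          - 2 * Real.log ‖√x • exp (I * (θ / 2)) + zsqrt ξ‖
          - 2 * Real.log ‖√x • exp (I * (θ / 2)) + -zsqrt ((starRingEnd ℂ) ξ)‖) := by
  rw [ZH, zsqrt_ofReal_mul_exp hx hθ]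
  simp only [real_smul, sub_eq_add_neg]

theorem exists_hasDerivAt_ZH_ofReal_mul_exp {ξ : ℂ} (hξ : ξ ≠ 0) {ρ θ : ℝ} (hρ : 0 < ρ)
    (hρξ : ρ ≤ ‖ξ‖ / 4) (hθ : θ ∈ Set.Ico (-π) π) :
    ∃ d, HasDerivAt (fun ρ' : ℝ => ZH (ρ' * exp (I * θ)) ξ) d ρ ∧
      |d| ≤ 2 / π * (1 / ‖ξ‖ + 1 / (√ρ * √‖ξ‖)) := by
  have hnξ : 0 < ‖ξ‖ := norm_pos_iff.mpr hξ
  have he : ‖exp (I * θ)‖ = 1 := norm_exp_I_mul_ofReal θ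
  have hh : ‖exp (I * (θ / 2))‖ = 1 := by exact_mod_cast norm_exp_I_mul_ofReal (θ / 2)
  have hρ' : |ρ| ≤ ‖ξ‖ / 2 := by rw [abs_of_pos hρ]; linarith
  have hsqrt : √ρ ≤ √‖ξ‖ / 2 := by
    rw [Real.sqrt_le_left (by positivity), div_pow, Real.sq_sqrt hnξ.le]
    linarith
  have hsξ : zsqrt ξ ≠ 0 := norm_pos_iff.mp (by rw [norm_zsqrt]; positivity)
  have hsξ' : zsqrt ((starRingEnd ℂ) ξ) ≠ 0 :=
    norm_pos_iff.mp (by rw [norm_zsqrt, norm_conj]; positivity)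
  obtain ⟨d₁, hd₁, hb₁⟩ := exists_hasDerivAt_log_norm_smul_add_of_abs_le
    (neg_ne_zero.mpr hξ) he (by rwa [norm_neg])
  obtain ⟨d₂, hd₂, hb₂⟩ := exists_hasDerivAt_log_norm_smul_add_of_abs_le
    (neg_ne_zero.mpr ((map_ne_zero _).mpr hξ)) he (by rwa [norm_neg, norm_conj])
  obtain ⟨d₃, hd₃, hb₃⟩ := exists_hasDerivAt_log_norm_sqrt_smul_add hsξ hh hρ
    (by rwa [norm_zsqrt])
  obtain ⟨d₄, hd₄, hb₄⟩ := exists_hasDerivAt_log_norm_sqrt_smul_add (neg_ne_zero.mpr hsξ') hh hρ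
    (by rwa [norm_neg, norm_zsqrt, norm_conj])
  rw [norm_neg] at hb₁
  rw [norm_neg, norm_conj] at hb₂
  rw [norm_zsqrt] at hb₃
  rw [norm_neg, norm_zsqrt, norm_conj] at hb₄
  refine ⟨-(1 / (2 * π)) * (d₁ + d₂ - 2 * d₃ - 2 * d₄), ?_, ?_⟩
  · refine ((((hd₁.add hd₂).sub (hd₃.const_mul 2)).sub (hd₄.const_mul 2)).const_mul _)
      |>.congr_of_eventuallyEq ?_
    filter_upwards [Ioi_mem_nhds hρ] with x hx
    exact ZH_ofReal_mul_exp ξ hx hθ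
  · have hsum : |d₁ + d₂ - 2 * d₃ - 2 * d₄| ≤ 4 * (1 / ‖ξ‖ + 1 / (√ρ * √‖ξ‖)) := by
      have h₂ : 2 / ‖ξ‖ = 2 * (1 / ‖ξ‖) := by ring
      rw [abs_le] at hb₁ hb₂ hb₃ hb₄ ⊢
      constructor <;> linarith [hb₁.1, hb₁.2, hb₂.1, hb₂.2, hb₃.1, hb₃.2, hb₄.1, hb₄.2]
    rw [abs_mul, abs_neg, abs_of_pos (by positivity)]
    calc 1 / (2 * π) * |d₁ + d₂ - 2 * d₃ - 2 * d₄|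
        ≤ 1 / (2 * π) * (4 * (1 / ‖ξ‖ + 1 / (√ρ * √‖ξ‖))) := by gcongr
      _ = 2 / π * (1 / ‖ξ‖ + 1 / (√ρ * √‖ξ‖)) := by field_simp; ring

/-- For fixed ξ with Im ξ < 0, the radial derivative of H in t satisfies
(∂/∂ρ)H(ρe^{iθ},ξ) = O(ρ^{−1/2}) as ρ → 0, uniformly in the angle θ ∈ [−π,0]. -/
theorem zaremba_green_radial_derivative_bound (ξ : ℂ) (hξ : ξ.im < 0) :
    ∃ C > (0:ℝ), ∃ r > (0:ℝ), ∀ ρ θ : ℝ, 0 < ρ → ρ < r → -Real.pi ≤ θ → θ ≤ 0 →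
      ∃ d : ℝ,
        HasDerivAt (fun ρ' : ℝ => ZH ((ρ' : ℂ) * Complex.exp (Complex.I * θ)) ξ) d ρ ∧
        |d| ≤ C * ρ ^ (-(1/2) : ℝ) := by
  have hξ₀ : ξ ≠ 0 := fun h => by simp [h] at hξ
  have hnξ : 0 < ‖ξ‖ := norm_pos_iff.mpr hξ₀
  refine ⟨2 / π * (1 / ‖ξ‖ + 1 / √‖ξ‖), by positivity, min 1 (‖ξ‖ / 4), by positivity, ?_⟩
  intro ρ θ hρ hρr hθπ hθ₀
  obtain ⟨d, hd, hdle⟩ := exists_hasDerivAt_ZH_ofReal_mul_exp hξ₀ hρ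
    (hρr.le.trans (min_le_right _ _)) ⟨hθπ, hθ₀.trans_lt pi_pos⟩
  have hsρ : 0 < √ρ := Real.sqrt_pos.mpr hρ
  have hsρ₁ : √ρ ≤ 1 := Real.sqrt_le_one.mpr (hρr.le.trans (min_le_left _ _))
  have hrpow : ρ ^ (-(1 / 2) : ℝ) = 1 / √ρ := by
    rw [rpow_neg hρ.le, ← Real.sqrt_eq_rpow, one_div]
  refine ⟨d, hd, hdle.trans ?_⟩
  rw [hrpow, mul_assoc, add_mul]
  gcongr 2 / π * (?_ + ?_)
  · rw [mul_one_div]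
    exact le_div_self (by positivity) hsρ hsρ₁
  · rw [div_mul_div_comm, one_mul, mul_comm]
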